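/- Let n ∈ ℕ be written as n = 2^s(2k+1) with s, k ≥ 0. Then there exist unique real numbers a_0, a_1, …, a_{k−1} such that Q_n = a_0 B_{2^s} + a_1 B_{3·2^s} + … + a_{k−1} B_{(2k−1)·2^s} + B_{(2k+1)·2^s}; that is, Q_n has a unique representation as a linear combination of B_{2^s}, B_{3·2^s}, …, B_{(2k+1)·2^s} in which the coefficient of B_{(2k+1)·2^s} is 1. -/

import Mathlib

open Polynomial MeasureTheory Filter

/-- `r γ s` : the recursively defined scales `r 0 = 1`, `r (s+1) = γ (s+1) * (r s)²`. -/
noncomputable def r (γ : ℕ → ℝ) : ℕ → ℝ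
  | 0 => 1
  | s + 1 => γ (s + 1) * (r γ s) ^ 2

/-- `P γ s` : the polynomial `P_{2^s}`, with `P_1 = X - 1` and
`P_{2^{s+1}} = P_{2^s} · (P_{2^s} + r_s)`. -/
noncomputable def P (γ : ℕ → ℝ) : ℕ → Polynomial ℝ
  | 0 => X - 1
  | s + 1 => P γ s * (P γ s + C (r γ s))

/-- The integral `∫ f dν_s` of a function `f` against the normalized counting measure `ν_s`
on the `2^s` (simple, real) zeros of `P_{2^s} + r_s/2`. -/
noncomputable def nuInt (γ : ℕ → ℝ) (s : ℕ) (f : ℝ → ℝ) : ℝ :=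
  (((P γ s + C (r γ s / 2)).roots.map f).sum) / 2 ^ s

/-- The `B`-polynomial `B_n = ∏_{k} (Q_{2^k})^{i_k}` where `n = Σ i_k 2^k` is the binary
expansion of `n` (all set bits of `n` are `< n` for `n ≥ 1`). -/
noncomputable def Bpoly (Q : ℕ → Polynomial ℝ) (n : ℕ) : Polynomial ℝ :=
  ∏ k ∈ Finset.range n, if Nat.testBit n k then Q (2 ^ k) else 1

/-! Comparing with the discrete measures `ν_u` shows that `P_{2^t} + r_t/2` is orthogonal to every
polynomial of degree `< 2^t`, so `Q_{2^t} = P_{2^t} + r_t/2` and therefore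
`Q_{2^t}² = Q_{2^{t+1}} + c_t` for a constant `c_t`.

Using this relation to merge repeated factors, every product `Q_{2^v} ∏ Q_{2^e}` with all `e > v`
has integral `0`: once its factors are distinct, the largest one is orthogonal to the product of
the others. Hence `B_m ⊥ B_{m'}` whenever `m` and `m'` have different `2`-adic valuations.
Expanding `Q_n - B_n`, of degree `< n`, in the basis `(B_m)_{m < n}`, its component along the
`B_m` whose valuation differs from `s` is then orthogonal to itself, hence zero; uniqueness holds
because the `B_m` have distinct degrees. -/

theorem Polynomial.Monic.add_C_of_natDegree_pos {R : Type*} [Semiring R] [Nontrivial R]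
    {p : R[X]} (hp : p.Monic) (h : 0 < p.natDegree) (c : R) : (p + C c).Monic :=
  hp.add_of_left (degree_C_le.trans_lt (by rwa [degree_eq_natDegree hp.ne_zero, Nat.cast_pos]))

theorem Polynomial.Monic.degree_sub_lt_of_natDegree_eq {R : Type*} [Ring R] [Nontrivial R]
    {p q : R[X]} (hp : p.Monic) (hq : q.Monic) (h : p.natDegree = q.natDegree) :
    (p - q).degree < p.natDegree := by
  rw [← degree_eq_natDegree hp.ne_zero]
  refine degree_sub_lt_left ?_ hp.ne_zero (by rw [hp.leadingCoeff, hq.leadingCoeff])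
  rw [degree_eq_natDegree hp.ne_zero, degree_eq_natDegree hq.ne_zero, h]

section LinearAlgebra

variable {R M ι : Type*} [CommRing R] [AddCommGroup M] [Module R M]

theorem LinearMap.BilinForm.mem_span_of_mem_span_union_of_isOrtho (B : LinearMap.BilinForm R M)
    (hB : ∀ x, B x x = 0 → x = 0) {sU sD : Set M} {w : M}
    (hw : w ∈ Submodule.span R (sU ∪ sD)) (hwU : ∀ u ∈ sU, B w u = 0)
    (hDU : ∀ d ∈ sD, ∀ u ∈ sU, B d u = 0) : w ∈ Submodule.span R sD := by
  have hDU' : ∀ d ∈ Submodule.span R sD, ∀ u ∈ Submodule.span R sU, B d u = 0 := by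
    intro d hd u hu
    refine (Submodule.span_le (p := LinearMap.ker (B d))).2 (fun u hu' => ?_) hu
    exact (Submodule.span_le (p := LinearMap.ker (B.flip u))).2 (fun d hd' => hDU d hd' u hu') hd
  rw [Submodule.span_union] at hw
  obtain ⟨u, hu, d, hd, rfl⟩ := Submodule.mem_sup.1 hw
  have huu : B u u = 0 := by
    have := (Submodule.span_le (p := LinearMap.ker (B (u + d)))).2 hwU hu
    rwa [LinearMap.mem_ker, LinearMap.map_add₂, hDU' d hd u hu, add_zero] at this
  rwa [hB u huu, zero_add]

theorem LinearIndependent.existsUnique_sum_smul_eq [Fintype ι] {v : ι → M}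
    (hv : LinearIndependent R v) {x : M} (hx : x ∈ Submodule.span R (Set.range v)) :
    ∃! c : ι → R, ∑ i, c i • v i = x := by
  obtain ⟨c, hc⟩ := (Submodule.mem_span_range_iff_exists_fun R).1 hx
  exact ⟨c, hc, fun c' hc' =>
    funext (Fintype.linearIndependent_iffₛ.1 hv c' c (hc'.trans hc.symm))⟩

end LinearAlgebra

section PolyInner

variable (μ : Measure ℝ) (hμ : ∀ p : ℝ[X], Integrable (fun x => p.eval x) μ)

noncomputable def polyIntegral : ℝ[X] →ₗ[ℝ] ℝ where
  toFun p := ∫ x, p.eval x ∂μ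
  map_add' p q := by simp only [eval_add]; exact integral_add (hμ p) (hμ q)
  map_smul' c p := by simp only [eval_smul, smul_eq_mul, integral_const_mul, RingHom.id_apply]

noncomputable def polyInner : LinearMap.BilinForm ℝ ℝ[X] :=
  (LinearMap.mul ℝ ℝ[X]).compr₂ (polyIntegral μ hμ)

variable {μ hμ}

@[simp]
theorem polyIntegral_apply (p : ℝ[X]) : polyIntegral μ hμ p = ∫ x, p.eval x ∂μ := rfl

theorem polyInner_eq_polyIntegral_mul (p q : ℝ[X]) :
    polyInner μ hμ p q = polyIntegral μ hμ (p * q) := rfl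

theorem polyInner_apply (p q : ℝ[X]) :
    polyInner μ hμ p q = ∫ x, p.eval x * q.eval x ∂μ := by
  simp only [polyInner_eq_polyIntegral_mul, polyIntegral_apply, eval_mul]

theorem eq_zero_of_polyInner_self_eq_zero (hpos : ∀ p : ℝ[X], p ≠ 0 → 0 < ∫ x, (p.eval x) ^ 2 ∂μ)
    {p : ℝ[X]} (hp : polyInner μ hμ p p = 0) : p = 0 := by
  by_contra hp0
  have := hpos p hp0
  simp only [polyInner_apply, ← sq] at hp
  linarith

theorem eq_of_monic_of_polyInner_eq_zero (hpos : ∀ p : ℝ[X], p ≠ 0 → 0 < ∫ x, (p.eval x) ^ 2 ∂μ)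
    {p q : ℝ[X]} {N : ℕ} (hp : p.Monic) (hq : q.Monic) (hpN : p.natDegree = N)
    (hqN : q.natDegree = N) (hpo : ∀ f : ℝ[X], f.degree < N → polyInner μ hμ p f = 0)
    (hqo : ∀ f : ℝ[X], f.degree < N → polyInner μ hμ q f = 0) : p = q := by
  have hdeg : (p - q).degree < N := hpN ▸ hp.degree_sub_lt_of_natDegree_eq hq (hpN.trans hqN.symm)
  refine sub_eq_zero.1 (eq_zero_of_polyInner_self_eq_zero (hμ := hμ) hpos ?_)
  rw [LinearMap.map_sub₂, hpo _ hdeg, hqo _ hdeg, sub_zero]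

end PolyInner

section CantorPolynomials

variable {γ : ℕ → ℝ}

theorem r_nonneg (hγ : ∀ s : ℕ, 0 ≤ γ (s + 1)) (t : ℕ) : 0 ≤ r γ t := by
  induction t with
  | zero => norm_num [r]
  | succ t ih => exact mul_nonneg (hγ t) (sq_nonneg _)

theorem r_succ_le (hγ : ∀ s : ℕ, γ (s + 1) ≤ 1 / 4) (t : ℕ) : r γ (t + 1) ≤ r γ t ^ 2 / 4 := by
  have := mul_le_mul_of_nonneg_right (hγ t) (sq_nonneg (r γ t))
  simp only [r]
  linarith

theorem monic_and_natDegree_P (γ : ℕ → ℝ) (t : ℕ) : (P γ t).Monic ∧ (P γ t).natDegree = 2 ^ t := by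
  induction t with
  | zero => exact ⟨monic_X_sub_C 1, natDegree_X_sub_C 1⟩
  | succ t ih =>
    have hadd := ih.1.add_C_of_natDegree_pos (by rw [ih.2]; positivity) (r γ t)
    refine ⟨ih.1.mul hadd, ?_⟩
    rw [P, ih.1.natDegree_mul hadd, natDegree_add_C, ih.2, pow_succ]
    ring

theorem monic_P_add_C (γ : ℕ → ℝ) (t : ℕ) (c : ℝ) : (P γ t + C c).Monic :=
  (monic_and_natDegree_P γ t).1.add_C_of_natDegree_pos
    (by rw [(monic_and_natDegree_P γ t).2]; positivity) c

theorem natDegree_P_add_C (γ : ℕ → ℝ) (t : ℕ) (c : ℝ) : (P γ t + C c).natDegree = 2 ^ t := by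
  rw [natDegree_add_C, (monic_and_natDegree_P γ t).2]

theorem P_succ_add_C_eq_mul {t : ℕ} {y y₁ y₂ : ℝ} (hsum : y₁ + y₂ = r γ t) (hprod : y₁ * y₂ = y) :
    P γ (t + 1) + C y = (P γ t + C y₁) * (P γ t + C y₂) := by
  rw [P, ← hsum, ← hprod, C_add, C_mul]
  ring

/-- `P_{2^{t+1}} + y` splits as `(P_{2^t} + y₁)(P_{2^t} + y₂)` with `y₁, y₂` the two roots of
`Y² - r_t Y + y`; they are real and lie in `[0, r_t]` because `r_{t+1} ≤ r_t² / 4`. -/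
theorem exists_roots_P_succ_add_C (hγ : ∀ s : ℕ, 0 ≤ γ (s + 1) ∧ γ (s + 1) ≤ 1 / 4) {t : ℕ}
    {y : ℝ} (hy : y ∈ Set.Icc 0 (r γ (t + 1))) :
    ∃ y₁ ∈ Set.Icc 0 (r γ t), ∃ y₂ ∈ Set.Icc 0 (r γ t), y₁ + y₂ = r γ t ∧
      (P γ (t + 1) + C y).roots = (P γ t + C y₁).roots + (P γ t + C y₂).roots := by
  have hr := r_nonneg (fun s => (hγ s).1) t
  have hr' := r_succ_le (fun s => (hγ s).2) t
  have hD : 0 ≤ r γ t ^ 2 - 4 * y := by linarith [hy.2]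
  have hsq := Real.sq_sqrt hD
  have hsqrt_nonneg := Real.sqrt_nonneg (r γ t ^ 2 - 4 * y)
  have hsqrt_le : √(r γ t ^ 2 - 4 * y) ≤ r γ t := by nlinarith [hy.1]
  refine ⟨(r γ t + √(r γ t ^ 2 - 4 * y)) / 2, ⟨by linarith, by linarith⟩,
    (r γ t - √(r γ t ^ 2 - 4 * y)) / 2, ⟨by linarith, by linarith⟩, by ring, ?_⟩
  rw [P_succ_add_C_eq_mul (y₁ := (r γ t + √(r γ t ^ 2 - 4 * y)) / 2)
      (y₂ := (r γ t - √(r γ t ^ 2 - 4 * y)) / 2) (by ring) (by linear_combination -hsq / 4),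
    roots_mul ((monic_P_add_C γ t _).mul (monic_P_add_C γ t _)).ne_zero]

theorem eval_P_of_mem_roots {t : ℕ} {y x : ℝ} (hx : x ∈ (P γ t + C y).roots) :
    (P γ t).eval x = -y := by
  have := (mem_roots'.1 hx).2
  rw [IsRoot, eval_add, eval_C] at this
  linarith

theorem sum_map_roots_P_mul_add (t : ℕ) (y : ℝ) (A B : ℝ[X]) :
    ((P γ t + C y).roots.map fun x => (P γ t * A + B).eval x).sum =
      -y * ((P γ t + C y).roots.map fun x => A.eval x).sum +
        ((P γ t + C y).roots.map fun x => B.eval x).sum := by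
  rw [← Multiset.sum_map_mul_left, ← Multiset.sum_map_add]
  refine congrArg Multiset.sum (Multiset.map_congr rfl fun x hx => ?_)
  rw [eval_add, eval_mul, eval_P_of_mem_roots hx]

section

variable (hγ : ∀ s : ℕ, 0 ≤ γ (s + 1) ∧ γ (s + 1) ≤ 1 / 4)
include hγ

theorem exists_sum_map_roots_P_add_C_eq (t : ℕ) (p : ℝ[X]) (hp : p.natDegree < 2 ^ t) :
    ∃ c, ∀ y ∈ Set.Icc 0 (r γ t), ((P γ t + C y).roots.map fun x => p.eval x).sum = c := by
  induction t generalizing p with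
  | zero =>
    obtain ⟨a, rfl⟩ := natDegree_eq_zero.1 (Nat.lt_one_iff.1 hp)
    refine ⟨a, fun y _ => ?_⟩
    rw [show P γ 0 + C y = X - C (1 - y) by simp only [P, C_sub, C_1]; ring, roots_X_sub_C]
    simp
  | succ t ih =>
    have hP := monic_and_natDegree_P γ t
    have hP1 : P γ t ≠ 1 := fun h => pow_ne_zero t two_ne_zero (by rw [← hP.2, h, natDegree_one])
    obtain ⟨cA, hA⟩ := ih (p /ₘ P γ t) (by
      rw [natDegree_divByMonic p hP.1, hP.2, pow_succ] at *; omega)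
    obtain ⟨cB, hB⟩ := ih (p %ₘ P γ t) (hP.2 ▸ natDegree_modByMonic_lt p hP.1 hP1)
    refine ⟨-r γ t * cA + 2 * cB, fun y hy => ?_⟩
    obtain ⟨y₁, hy₁, y₂, hy₂, hsum, hroots⟩ := exists_roots_P_succ_add_C hγ hy
    rw [hroots, Multiset.map_add, Multiset.sum_add, ← modByMonic_add_div p (P γ t),
      add_comm (p %ₘ P γ t), sum_map_roots_P_mul_add, sum_map_roots_P_mul_add, hA y₁ hy₁, hA y₂ hy₂,
      hB y₁ hy₁, hB y₂ hy₂]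
    linear_combination -cA * hsum

theorem sum_map_roots_P_add_C_mul_eq_zero {t u : ℕ} (htu : t < u) (p : ℝ[X])
    (hp : p.natDegree < 2 ^ t) {y : ℝ} (hy : y ∈ Set.Icc 0 (r γ u)) :
    ((P γ u + C y).roots.map fun x => ((P γ t + C (r γ t / 2)) * p).eval x).sum = 0 := by
  induction u, htu using Nat.le_induction generalizing y with
  | base =>
    obtain ⟨c, hc⟩ := exists_sum_map_roots_P_add_C_eq hγ t p hp
    obtain ⟨y₁, hy₁, y₂, hy₂, hsum, hroots⟩ := exists_roots_P_succ_add_C hγ hy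
    have hsplit : (P γ t + C (r γ t / 2)) * p = P γ t * p + C (r γ t / 2) * p := by ring
    simp only [hroots, Multiset.map_add, Multiset.sum_add, hsplit, sum_map_roots_P_mul_add,
      eval_mul, eval_C, Multiset.sum_map_mul_left, hc y₁ hy₁, hc y₂ hy₂]
    linear_combination -c * hsum
  | succ u _ ih =>
    obtain ⟨y₁, hy₁, y₂, hy₂, -, hroots⟩ := exists_roots_P_succ_add_C hγ hy
    rw [hroots, Multiset.map_add, Multiset.sum_add, ih hy₁, ih hy₂, add_zero]

theorem nuInt_P_add_C_mul_eq_zero {t u : ℕ} (htu : t < u) (p : ℝ[X])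
    (hp : p.natDegree < 2 ^ t) :
    nuInt γ u (fun x => ((P γ t + C (r γ t / 2)) * p).eval x) = 0 := by
  have hr := r_nonneg (fun s => (hγ s).1) u
  rw [nuInt, sum_map_roots_P_add_C_mul_eq_zero hγ htu p hp ⟨by positivity, by linarith⟩,
    zero_div]

theorem integral_P_add_C_mul_eq_zero {μ : Measure ℝ}
    (hμconv : ∀ p : ℝ[X],
      Tendsto (fun s => nuInt γ s (fun x => p.eval x)) atTop (nhds (∫ x, p.eval x ∂μ)))
    (t : ℕ) (p : ℝ[X]) (hp : p.degree < (2 ^ t : ℕ)) :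
    ∫ x, (P γ t + C (r γ t / 2)).eval x * p.eval x ∂μ = 0 := by
  have hp' : p.natDegree < 2 ^ t := by
    rcases eq_or_ne p 0 with rfl | hp0
    · simp
    · exact (natDegree_lt_iff_degree_lt hp0).2 hp
  have hzero : Tendsto (fun u => nuInt γ u (fun x => ((P γ t + C (r γ t / 2)) * p).eval x))
      atTop (nhds 0) :=
    tendsto_const_nhds.congr' (eventually_atTop.2
      ⟨t + 1, fun u hu => (nuInt_P_add_C_mul_eq_zero hγ hu p hp').symm⟩)
  simpa only [eval_mul] using tendsto_nhds_unique (hμconv _) hzero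

end

end CantorPolynomials

section OrthogonalPolynomials

variable {μ : Measure ℝ} {hμ : ∀ p : ℝ[X], Integrable (fun x => p.eval x) μ} {Q : ℕ → ℝ[X]}
  (hQmonic : ∀ n, (Q n).Monic) (hQdeg : ∀ n, (Q n).natDegree = n)
  (hQorth : ∀ n : ℕ, ∀ p : ℝ[X], p.degree < (n : WithBot ℕ) → polyInner μ hμ (Q n) p = 0)

include hQmonic hQdeg hQorth in
theorem Q_two_pow_eq {γ : ℕ → ℝ} (hγ : ∀ s : ℕ, 0 ≤ γ (s + 1) ∧ γ (s + 1) ≤ 1 / 4)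
    (hpos : ∀ p : ℝ[X], p ≠ 0 → 0 < ∫ x, (p.eval x) ^ 2 ∂μ)
    (hμconv : ∀ p : ℝ[X],
      Tendsto (fun s => nuInt γ s (fun x => p.eval x)) atTop (nhds (∫ x, p.eval x ∂μ)))
    (t : ℕ) : Q (2 ^ t) = P γ t + C (r γ t / 2) :=
  eq_of_monic_of_polyInner_eq_zero hpos (hQmonic _) (monic_P_add_C γ t _) (hQdeg _)
    (natDegree_P_add_C γ t _) (hQorth _) fun f hf => by
      rw [polyInner_apply]; exact integral_P_add_C_mul_eq_zero hγ hμconv t f hf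

include hQmonic hQdeg hQorth in
theorem Q_two_pow_sq {γ : ℕ → ℝ} (hγ : ∀ s : ℕ, 0 ≤ γ (s + 1) ∧ γ (s + 1) ≤ 1 / 4)
    (hpos : ∀ p : ℝ[X], p ≠ 0 → 0 < ∫ x, (p.eval x) ^ 2 ∂μ)
    (hμconv : ∀ p : ℝ[X],
      Tendsto (fun s => nuInt γ s (fun x => p.eval x)) atTop (nhds (∫ x, p.eval x ∂μ)))
    (t : ℕ) : Q (2 ^ t) ^ 2 = Q (2 ^ (t + 1)) + C (r γ t ^ 2 / 4 - r γ (t + 1) / 2) := by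
  have hr : C (r γ t) = C (r γ t / 2) + C (r γ t / 2) := by rw [← C_add, add_halves]
  have hconst : C (r γ (t + 1) / 2) + C (r γ t ^ 2 / 4 - r γ (t + 1) / 2) =
      C (r γ t / 2) * C (r γ t / 2) := by rw [← C_add, ← C_mul]; ring_nf
  simp only [Q_two_pow_eq hQmonic hQdeg hQorth hγ hpos hμconv, P]
  linear_combination -P γ t * hr - hconst

end OrthogonalPolynomials

section BPolynomials

theorem Bpoly_eq_prod_bitIndices (Q : ℕ → ℝ[X]) (n : ℕ) :
    Bpoly Q n = ∏ e ∈ n.bitIndices.toFinset, Q (2 ^ e) := by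
  rw [Bpoly, ← Finset.prod_filter]
  congr 1
  ext e
  simp only [Finset.mem_filter, Finset.mem_range, List.mem_toFinset, Nat.mem_bitIndices,
    and_iff_right_iff_imp]
  exact fun h => e.lt_two_pow_self.trans_le (Nat.ge_two_pow_of_testBit h)

theorem Bpoly_zero (Q : ℕ → ℝ[X]) : Bpoly Q 0 = 1 := by
  simp [Bpoly]

theorem exists_Bpoly_two_pow_mul_odd_eq (Q : ℕ → ℝ[X]) (v j : ℕ) :
    ∃ L : Multiset ℕ, (∀ e ∈ L, v < e) ∧
      Bpoly Q (2 ^ v * (2 * j + 1)) = Q (2 ^ v) * (L.map fun e => Q (2 ^ e)).prod := by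
  refine ⟨(j.bitIndices.map fun e => e + 1 + v : List ℕ), ?_, ?_⟩
  · simp only [Multiset.mem_coe, List.mem_map]
    rintro _ ⟨e, -, rfl⟩
    omega
  · rw [Bpoly_eq_prod_bitIndices, List.prod_toFinset _ Nat.bitIndices_nodup,
      Nat.bitIndices_two_pow_mul, Nat.bitIndices_two_mul_add_one]
    simp [Function.comp_def, add_assoc]

variable {Q : ℕ → ℝ[X]} (hQmonic : ∀ n, (Q n).Monic) (hQdeg : ∀ n, (Q n).natDegree = n)

include hQmonic in
theorem monic_Bpoly (n : ℕ) : (Bpoly Q n).Monic := by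
  rw [Bpoly_eq_prod_bitIndices]
  exact monic_prod_of_monic _ _ fun e _ => hQmonic _

include hQmonic hQdeg

theorem natDegree_Bpoly (n : ℕ) :
    (Bpoly Q n).natDegree = n := by
  rw [Bpoly_eq_prod_bitIndices, natDegree_prod_of_monic _ _ fun e _ => hQmonic _]
  simp only [hQdeg, Finset.sum_toFinset_bitIndices_two_pow]

noncomputable def Bsequence : Polynomial.Sequence ℝ where
  elems' := Bpoly Q
  degree_eq' n := by
    rw [degree_eq_natDegree (monic_Bpoly hQmonic n).ne_zero, natDegree_Bpoly hQmonic hQdeg]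

theorem sub_Bpoly_mem_span {p : ℝ[X]} (hp : p.Monic) {n : ℕ} (hpn : p.natDegree = n) :
    p - Bpoly Q n ∈ Submodule.span ℝ (Bpoly Q '' Set.Iio n) := by
  subst hpn
  change _ ∈ Submodule.span ℝ (Bsequence hQmonic hQdeg '' Set.Iio _)
  rw [(Bsequence hQmonic hQdeg).span_degreeLT fun i _ => by
      simp [Bsequence, (monic_Bpoly hQmonic i).leadingCoeff], mem_degreeLT]
  exact hp.degree_sub_lt_of_natDegree_eq (monic_Bpoly hQmonic _)
    (natDegree_Bpoly hQmonic hQdeg _).symm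

theorem linearIndependent_Bpoly_odd_mul_two_pow (s k : ℕ) :
    LinearIndependent ℝ fun j : Fin k => Bpoly Q ((2 * j + 1) * 2 ^ s) :=
  (Bsequence hQmonic hQdeg).linearIndependent.comp _ fun i j h =>
    Fin.ext (by simpa [Bsequence] using h)

section

variable {μ : Measure ℝ} {hμ : ∀ p : ℝ[X], Integrable (fun x => p.eval x) μ}
  (hQorth : ∀ n : ℕ, ∀ p : ℝ[X], p.degree < (n : WithBot ℕ) → polyInner μ hμ (Q n) p = 0)
include hQorth

theorem polyIntegral_prod_Q_two_pow_eq_zero {S : Finset ℕ} (hS : S.Nonempty) :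
    polyIntegral μ hμ (∏ e ∈ S, Q (2 ^ e)) = 0 := by
  set E := S.max' hS
  have hrest : (∏ e ∈ S.erase E, Q (2 ^ e)).Monic := monic_prod_of_monic _ _ fun e _ => hQmonic _
  have hdeg : (∏ e ∈ S.erase E, Q (2 ^ e)).natDegree < 2 ^ E := by
    rw [natDegree_prod_of_monic _ _ fun e _ => hQmonic _]
    simp only [hQdeg]
    exact Nat.geomSum_lt le_rfl fun e he =>
      (S.le_max' e (Finset.mem_of_mem_erase he)).lt_of_ne (Finset.ne_of_mem_erase he)
  rw [← Finset.mul_prod_erase S _ (S.max'_mem hS)]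
  exact hQorth _ _ (by rw [degree_eq_natDegree hrest.ne_zero]; exact_mod_cast hdeg)

theorem polyIntegral_Q_two_pow_mul_prod_eq_zero (c : ℕ → ℝ)
    (hsq : ∀ t, Q (2 ^ t) ^ 2 = Q (2 ^ (t + 1)) + C (c t)) (v : ℕ) (L : Multiset ℕ)
    (hL : ∀ e ∈ L, v < e) :
    polyIntegral μ hμ (Q (2 ^ v) * (L.map fun e => Q (2 ^ e)).prod) = 0 := by
  induction hcard : L.card using Nat.strong_induction_on generalizing L with
  | _ N ih =>
  by_cases hnodup : (v ::ₘ L).Nodup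
  · have := polyIntegral_prod_Q_two_pow_eq_zero hQmonic hQdeg hQorth
      (S := ⟨v ::ₘ L, hnodup⟩) ⟨v, Multiset.mem_cons_self v L⟩
    rwa [Finset.prod_eq_multiset_prod, Multiset.map_cons, Multiset.prod_cons] at this
  · have hv : v ∉ L := fun h => lt_irrefl v (hL v h)
    obtain ⟨e, L', rfl⟩ : ∃ e L', L = e ::ₘ e ::ₘ L' := by
      obtain ⟨e, he⟩ : ∃ e, e ::ₘ e ::ₘ 0 ≤ L := by
        rw [Multiset.nodup_cons, not_and_or, not_not, Multiset.nodup_iff_le] at hnodup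
        simpa [hv] using hnodup
      obtain ⟨L', rfl⟩ := Multiset.le_iff_exists_add.1 he
      exact ⟨e, L', by simp⟩
    have hL' : ∀ x ∈ L', v < x := fun x hx => hL x (by simp [hx])
    have hsplit : Q (2 ^ v) * ((e ::ₘ e ::ₘ L').map fun e => Q (2 ^ e)).prod =
        Q (2 ^ v) * (((e + 1) ::ₘ L').map fun e => Q (2 ^ e)).prod +
          c e • (Q (2 ^ v) * (L'.map fun e => Q (2 ^ e)).prod) := by
      simp only [Multiset.map_cons, Multiset.prod_cons, smul_eq_C_mul]
      linear_combination (Q (2 ^ v) * (L'.map fun e => Q (2 ^ e)).prod) * hsq e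
    simp only [Multiset.card_cons] at hcard
    rw [hsplit, map_add, map_smul,
      ih (L'.card + 1) (by omega) _ (fun x hx => ?_) (Multiset.card_cons _ _),
      ih L'.card (by omega) _ hL' rfl, smul_zero, add_zero]
    rcases Multiset.mem_cons.1 hx with rfl | hx
    · exact (hL e (Multiset.mem_cons_self _ _)).trans (Nat.lt_succ_self e)
    · exact hL' x hx

variable (c : ℕ → ℝ) (hsq : ∀ t, Q (2 ^ t) ^ 2 = Q (2 ^ (t + 1)) + C (c t))
include hsq

/-- `B_m` and `B_{m'}` are orthogonal as soon as the `2`-adic valuations of `m` and `m'` differ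
(with `B_0 = 1` counted as having any other valuation). -/
theorem polyInner_Bpoly_eq_zero {s m : ℕ} (hm : ∀ i, m ≠ (2 * i + 1) * 2 ^ s) (j : ℕ) :
    polyInner μ hμ (Bpoly Q ((2 * j + 1) * 2 ^ s)) (Bpoly Q m) = 0 := by
  have hvanish := polyIntegral_Q_two_pow_mul_prod_eq_zero hQmonic hQdeg hQorth c hsq
  obtain ⟨L, hL, hB⟩ := exists_Bpoly_two_pow_mul_odd_eq Q s j
  rw [polyInner_eq_polyIntegral_mul, mul_comm _ (2 ^ s), hB]
  rcases eq_or_ne m 0 with rfl | hm0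
  · rw [Bpoly_zero, mul_one]
    exact hvanish s L hL
  obtain ⟨v, _, ⟨i, rfl⟩, rfl⟩ := Nat.exists_eq_two_pow_mul_odd hm0
  obtain ⟨L', hL', hB'⟩ := exists_Bpoly_two_pow_mul_odd_eq Q v i
  have hvs : v ≠ s := fun h => hm i (by rw [h, mul_comm])
  rw [hB']
  rcases hvs.lt_or_gt with hlt | hgt
  · have := hvanish v (L' + s ::ₘ L) (by
      simp only [Multiset.mem_add, Multiset.mem_cons]
      rintro e (he | rfl | he)
      exacts [hL' e he, hlt, hlt.trans (hL e he)])
    rw [Multiset.map_add, Multiset.prod_add, Multiset.map_cons, Multiset.prod_cons] at this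
    rwa [mul_comm, mul_assoc]
  · have := hvanish s (L + v ::ₘ L') (by
      simp only [Multiset.mem_add, Multiset.mem_cons]
      rintro e (he | rfl | he)
      exacts [hL e he, hgt, hgt.trans (hL' e he)])
    rwa [Multiset.map_add, Multiset.prod_add, Multiset.map_cons, Multiset.prod_cons,
      ← mul_assoc] at this

theorem Q_sub_Bpoly_mem_span_Bpoly_odd_mul_two_pow
    (hpos : ∀ p : ℝ[X], p ≠ 0 → 0 < ∫ x, (p.eval x) ^ 2 ∂μ) (s k : ℕ) :
    Q ((2 * k + 1) * 2 ^ s) - Bpoly Q ((2 * k + 1) * 2 ^ s) ∈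
      Submodule.span ℝ (Set.range fun j : Fin k => Bpoly Q ((2 * j + 1) * 2 ^ s)) := by
  set n := (2 * k + 1) * 2 ^ s
  have hsplit : Bpoly Q '' Set.Iio n ⊆ Bpoly Q '' {m | m < n ∧ ∀ i, m ≠ (2 * i + 1) * 2 ^ s} ∪
      Set.range fun j : Fin k => Bpoly Q ((2 * j + 1) * 2 ^ s) := by
    rintro _ ⟨m, hm, rfl⟩
    by_cases hodd : ∃ i, m = (2 * i + 1) * 2 ^ s
    · obtain ⟨i, rfl⟩ := hodd
      have hik : 2 * i + 1 < 2 * k + 1 := Nat.lt_of_mul_lt_mul_right hm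
      exact Or.inr ⟨⟨i, by omega⟩, rfl⟩
    · exact Or.inl ⟨m, ⟨hm, not_exists.1 hodd⟩, rfl⟩
  refine (polyInner μ hμ).mem_span_of_mem_span_union_of_isOrtho
    (fun _ => eq_zero_of_polyInner_self_eq_zero hpos)
    (Submodule.span_mono hsplit (sub_Bpoly_mem_span hQmonic hQdeg (hQmonic n) (hQdeg n))) ?_ ?_
  · rintro _ ⟨m, ⟨hm, hodd⟩, rfl⟩
    have hdeg : (Bpoly Q m).degree < n := by
      rw [degree_eq_natDegree (monic_Bpoly hQmonic m).ne_zero, natDegree_Bpoly hQmonic hQdeg]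
      exact_mod_cast hm
    rw [LinearMap.map_sub₂, hQorth n _ hdeg,
      polyInner_Bpoly_eq_zero hQmonic hQdeg hQorth c hsq hodd k, sub_zero]
  · rintro _ ⟨j, rfl⟩ _ ⟨m, ⟨-, hodd⟩, rfl⟩
    exact polyInner_Bpoly_eq_zero hQmonic hQdeg hQorth c hsq hodd j

end

end BPolynomials

theorem stmt_13_general (γ : ℕ → ℝ) (hγ : ∀ s : ℕ, 0 < γ (s + 1) ∧ γ (s + 1) < 1 / 4)
    (μ : Measure ℝ)
    (hμint : ∀ p : Polynomial ℝ, Integrable (fun x => p.eval x) μ)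
    (hμpos : ∀ p : Polynomial ℝ, p ≠ 0 → 0 < ∫ x, (p.eval x) ^ 2 ∂μ)
    (hμconv : ∀ p : Polynomial ℝ,
      Tendsto (fun s => nuInt γ s (fun x => p.eval x)) atTop (nhds (∫ x, p.eval x ∂μ)))
    (Q : ℕ → Polynomial ℝ) (hQmonic : ∀ n, (Q n).Monic) (hQdeg : ∀ n, (Q n).natDegree = n)
    (hQorth : ∀ n : ℕ, ∀ p : Polynomial ℝ, p.degree < (n : WithBot ℕ) →
      ∫ x, (Q n).eval x * p.eval x ∂μ = 0)
    (n s k : ℕ) (hn : n = 2 ^ s * (2 * k + 1)) :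
    ∃! a : Fin k → ℝ,
      Q n = (∑ j : Fin k, C (a j) * Bpoly Q ((2 * (j : ℕ) + 1) * 2 ^ s)) +
        Bpoly Q ((2 * k + 1) * 2 ^ s) := by
  replace hQorth : ∀ n : ℕ, ∀ p : ℝ[X], p.degree < n → polyInner μ hμint (Q n) p = 0 :=
    fun n p hp => (polyInner_apply _ _).trans (hQorth n p hp)
  have hsq := Q_two_pow_sq hQmonic hQdeg hQorth
    (fun s => ⟨(hγ s).1.le, (hγ s).2.le⟩) hμpos hμconv
  obtain rfl : n = (2 * k + 1) * 2 ^ s := hn.trans (mul_comm _ _)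
  refine (existsUnique_congr fun a => ?_).1
    ((linearIndependent_Bpoly_odd_mul_two_pow hQmonic hQdeg s k).existsUnique_sum_smul_eq
      (Q_sub_Bpoly_mem_span_Bpoly_odd_mul_two_pow hQmonic hQdeg hQorth _ hsq hμpos s k))
  simp only [smul_eq_C_mul]
  rw [eq_sub_iff_add_eq, eq_comm]

theorem stmt_13 (γ : ℕ → ℝ) (hγ : ∀ s : ℕ, 0 < γ (s + 1) ∧ γ (s + 1) < 1 / 4)
    (μ : Measure ℝ) [IsProbabilityMeasure μ]
    (hμint : ∀ p : Polynomial ℝ, Integrable (fun x => p.eval x) μ)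
    (hμpos : ∀ p : Polynomial ℝ, p ≠ 0 → 0 < ∫ x, (p.eval x) ^ 2 ∂μ)
    (hμconv : ∀ p : Polynomial ℝ,
      Tendsto (fun s => nuInt γ s (fun x => p.eval x)) atTop (nhds (∫ x, p.eval x ∂μ)))
    (Q : ℕ → Polynomial ℝ) (hQmonic : ∀ n, (Q n).Monic) (hQdeg : ∀ n, (Q n).natDegree = n)
    (hQorth : ∀ n : ℕ, ∀ p : Polynomial ℝ, p.degree < (n : WithBot ℕ) →
      ∫ x, (Q n).eval x * p.eval x ∂μ = 0)
    (n s k : ℕ) (hn : n = 2 ^ s * (2 * k + 1)) :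
    ∃! a : Fin k → ℝ,
      Q n = (∑ j : Fin k, C (a j) * Bpoly Q ((2 * (j : ℕ) + 1) * 2 ^ s)) +
        Bpoly Q ((2 * k + 1) * 2 ^ s) :=
  stmt_13_general γ hγ μ hμint hμpos hμconv Q hQmonic hQdeg hQorth n s k hn
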